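/- arXiv:2209.14554 — 3 statements merged into one kernel-verified Lean document; each statement's English description precedes it below -/
import Mathlib

section
/- Let f : ℂ^k × ℂ^k → ℂ be sesquilinear. Then for every orthonormal basis {E_1,…,E_k} of ℂ^k, ∫_{S^{2k−1}} f(Y,Y) dθ(Y) = (V(S^{2k−1})/k) · Σ_{i=1}^k f(E_i,E_i). -/
open MeasureTheory Metric

noncomputable instance (k : ℕ) : MeasurableSpace (EuclideanSpace ℂ (Fin k)) :=
  MeasurableSpace.comap WithLp.ofLp MeasurableSpace.pi
instance (k : ℕ) : BorelSpace (EuclideanSpace ℂ (Fin k)) := PiLp.borelSpace 2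

/-- The spherical (surface) measure `θ` on the unit sphere `S^{2k-1} ⊂ ℂ^k`. -/
noncomputable def sphereMeasure (k : ℕ) :
    Measure (sphere (0 : EuclideanSpace ℂ (Fin k)) 1) :=
  (volume : Measure (EuclideanSpace ℂ (Fin k))).toSphere

/-- The total volume `V(S^{2k-1})` of the unit sphere. -/
noncomputable def sphereVol (k : ℕ) : ℝ := (sphereMeasure k Set.univ).toReal

/-- `f` is sesquilinear: linear in the first variable, conjugate-linear in the second. -/
def Sesquilinear {H : Type*} [AddCommGroup H] [Module ℂ H] (f : H → H → ℂ) : Prop :=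
  (∀ x x' y, f (x + x') y = f x y + f x' y) ∧
  (∀ (c : ℂ) (x y : H), f (c • x) y = c * f x y) ∧
  (∀ x y y', f x (y + y') = f x y + f x y') ∧
  (∀ (c : ℂ) (x y : H), f x (c • y) = (starRingEnd ℂ) c * f x y)

/-!
Expanding `Y` in the orthonormal basis `E` gives `f(Y,Y) = ∑ᵢⱼ Yᵢ conj(Yⱼ) f(Eᵢ,Eⱼ)`, so it suffices
to compute the moments `∫ Yᵢ conj(Yⱼ) dθ`. Since Lebesgue measure is invariant under every linear
isometry, so is `θ`. Flipping the sign of the `i`-th coordinate shows that the off-diagonal moments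
vanish, swapping two coordinates shows that the diagonal ones are all equal, and these add up to
`V(S^{2k-1})` because `∑ᵢ |Yᵢ|² = 1` on the sphere.
-/

open scoped Pointwise ComplexConjugate

namespace LinearIsometryEquiv

section RestrictScalars

variable (R : Type*) {S E F : Type*} [Semiring R] [Semiring S]
  [SeminormedAddCommGroup E] [SeminormedAddCommGroup F]
  [Module R E] [Module R F] [Module S E] [Module S F] [LinearMap.CompatibleSMul E F R S]

def restrictScalars (e : E ≃ₗᵢ[S] F) : E ≃ₗᵢ[R] F :=
  { e.toLinearEquiv.restrictScalars R with norm_map' := e.norm_map }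

@[simp] lemma coe_restrictScalars (e : E ≃ₗᵢ[S] F) : ⇑(e.restrictScalars R) = e := rfl

end RestrictScalars

variable {E : Type*} [NormedAddCommGroup E] [NormedSpace ℝ E]

def sphereHomeomorph (e : E ≃ₗᵢ[ℝ] E) : sphere (0 : E) 1 ≃ₜ sphere (0 : E) 1 :=
  e.toHomeomorph.subtype fun x => by simp

@[simp] lemma coe_sphereHomeomorph_apply (e : E ≃ₗᵢ[ℝ] E) (y : sphere (0 : E) 1) :
    (e.sphereHomeomorph y : E) = e y := rfl

lemma image_val_preimage_sphereHomeomorph (e : E ≃ₗᵢ[ℝ] E) (s : Set (sphere (0 : E) 1)) :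
    (↑) '' (e.sphereHomeomorph ⁻¹' s) = e ⁻¹' ((↑) '' s) := by
  ext x
  constructor
  · rintro ⟨y, hy, rfl⟩
    exact ⟨_, hy, rfl⟩
  · rintro ⟨y, hy, hxy⟩
    have hx : x ∈ sphere (0 : E) 1 := by simpa [hxy] using y.2
    have hy' : e.sphereHomeomorph ⟨x, hx⟩ = y := Subtype.ext hxy.symm
    exact ⟨⟨x, hx⟩, by rwa [Set.mem_preimage, hy'], rfl⟩

lemma preimage_smul_set (e : E ≃ₗᵢ[ℝ] E) (t : Set ℝ) (A : Set E) :
    e ⁻¹' (t • A) = t • e ⁻¹' A := by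
  ext x
  simp only [Set.mem_preimage, Set.mem_smul]
  constructor
  · rintro ⟨r, hr, y, hy, hxy⟩
    exact ⟨r, hr, e.symm y, by simpa using hy, by rw [← e.symm.map_smul, hxy, symm_apply_apply]⟩
  · rintro ⟨r, hr, y, hy, rfl⟩
    exact ⟨r, hr, e y, hy, (e.map_smul r y).symm⟩

lemma measurePreserving_sphereHomeomorph [MeasurableSpace E] [BorelSpace E] {μ : Measure E}
    {e : E ≃ₗᵢ[ℝ] E} (he : MeasurePreserving e μ μ) :
    MeasurePreserving e.sphereHomeomorph μ.toSphere μ.toSphere := by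
  have hmeas := e.sphereHomeomorph.continuous.measurable
  refine ⟨hmeas, Measure.ext fun s hs => ?_⟩
  rw [Measure.map_apply hmeas hs, Measure.toSphere_apply' _ hs,
    Measure.toSphere_apply' _ (hmeas hs), image_val_preimage_sphereHomeomorph,
    ← preimage_smul_set, he.measure_preimage_emb e.toHomeomorph.measurableEmbedding]

end LinearIsometryEquiv

namespace Sesquilinear

variable {H : Type*} [AddCommGroup H] [Module ℂ H] {f : H → H → ℂ}

def toLinearMap₂ (hf : Sesquilinear f) : H →ₗ[ℂ] H →ₗ⋆[ℂ] ℂ :=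
  LinearMap.mk₂'ₛₗ _ _ f hf.1 hf.2.1 hf.2.2.1 hf.2.2.2

lemma apply_sum_smul_sum_smul (hf : Sesquilinear f) {ι : Type*} (s : Finset ι) (c d : ι → ℂ)
    (v : ι → H) :
    f (∑ i ∈ s, c i • v i) (∑ j ∈ s, d j • v j) =
      ∑ i ∈ s, ∑ j ∈ s, c i * conj (d j) * f (v i) (v j) := by
  change hf.toLinearMap₂ _ _ = ∑ i ∈ s, ∑ j ∈ s, c i * conj (d j) * hf.toLinearMap₂ (v i) (v j)
  simp only [map_sum, map_smul, LinearMap.sum_apply, LinearMap.smul_apply, map_smulₛₗ, smul_eq_mul,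
    Finset.mul_sum, mul_assoc]
  rw [Finset.sum_comm]
  exact Finset.sum_congr rfl fun _ _ => Finset.sum_congr rfl fun _ _ => mul_left_comm _ _ _

end Sesquilinear

section UnitarilyInvariant

variable {H : Type*} [NormedAddCommGroup H] [InnerProductSpace ℂ H] [MeasurableSpace H]
  [BorelSpace H] {ι : Type*} [Fintype ι]

def IsUnitarilyInvariant (ν : Measure (sphere (0 : H) 1)) : Prop :=
  ∀ u : H ≃ₗᵢ[ℂ] H, MeasurePreserving (u.restrictScalars ℝ).sphereHomeomorph ν ν

variable {ν : Measure (sphere (0 : H) 1)}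

namespace OrthonormalBasis

lemma integrable_repr_mul_conj_repr [IsFiniteMeasure ν] (b : OrthonormalBasis ι ℂ H) (i j : ι) :
    Integrable (fun y : sphere (0 : H) 1 => b.repr y i * conj (b.repr y j)) ν := by
  have : FiniteDimensional ℂ H := b.toBasis.finiteDimensional_of_finite
  have hcont : Continuous fun y : sphere (0 : H) 1 => b.repr y i * conj (b.repr y j) := by
    fun_prop
  exact hcont.integrable_of_hasCompactSupport (.of_compactSpace _)

lemma integral_comp_conj_repr (hν : IsUnitarilyInvariant ν) (b : OrthonormalBasis ι ℂ H)
    (D : EuclideanSpace ℂ ι ≃ₗᵢ[ℂ] EuclideanSpace ℂ ι) {G : Type*} [NormedAddCommGroup G]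
    [NormedSpace ℝ G] (g : EuclideanSpace ℂ ι → G) :
    ∫ y, g (D (b.repr y)) ∂ν = ∫ y, g (b.repr y) ∂ν := by
  have hu := hν ((b.repr.trans D).trans b.repr.symm)
  simpa using hu.integral_comp (Homeomorph.measurableEmbedding _) fun y => g (b.repr y)

lemma integral_repr_mul_conj_repr_of_ne [DecidableEq ι] (hν : IsUnitarilyInvariant ν)
    (b : OrthonormalBasis ι ℂ H) {i j : ι} (hij : i ≠ j) :
    ∫ y, b.repr y i * conj (b.repr y j) ∂ν = 0 := by
  let D : EuclideanSpace ℂ ι ≃ₗᵢ[ℂ] EuclideanSpace ℂ ι := LinearIsometryEquiv.piLpCongrRight 2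
    fun l => if l = i then LinearIsometryEquiv.neg ℂ else LinearIsometryEquiv.refl ℂ ℂ
  have h := integral_comp_conj_repr hν b D fun x => x i * conj (x j)
  simp only [D, LinearIsometryEquiv.piLpCongrRight_apply, ↓reduceIte, LinearIsometryEquiv.coe_neg,
    hij.symm, LinearIsometryEquiv.coe_refl, id_eq, neg_mul, integral_neg] at h
  linear_combination -h / 2

lemma integral_repr_mul_conj_repr_self_eq [DecidableEq ι] (hν : IsUnitarilyInvariant ν)
    (b : OrthonormalBasis ι ℂ H) (i j : ι) :
    ∫ y, b.repr y i * conj (b.repr y i) ∂ν = ∫ y, b.repr y j * conj (b.repr y j) ∂ν := by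
  have h := integral_comp_conj_repr hν b
    (LinearIsometryEquiv.piLpCongrLeft 2 ℂ ℂ (Equiv.swap i j)) fun x => x j * conj (x j)
  simpa [LinearIsometryEquiv.piLpCongrLeft_apply, Equiv.piCongrLeft'_apply] using h

lemma integral_repr_mul_conj_repr [DecidableEq ι] [IsFiniteMeasure ν]
    (hν : IsUnitarilyInvariant ν) (b : OrthonormalBasis ι ℂ H) (i j : ι) :
    ∫ y, b.repr y i * conj (b.repr y j) ∂ν =
      if i = j then (ν.real Set.univ : ℂ) / Fintype.card ι else 0 := by
  split_ifs with hij
  · subst hij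
    have : Nonempty ι := ⟨i⟩
    have hsum : ∑ j, ∫ y, b.repr y j * conj (b.repr y j) ∂ν = ν.real Set.univ := by
      rw [← integral_finsetSum _ fun j _ => integrable_repr_mul_conj_repr b j j]
      simp_rw [Complex.mul_conj', b.repr_apply_apply]
      norm_cast
      simp [b.sum_sq_norm_inner_right]
    rw [eq_div_iff (Nat.cast_ne_zero.2 Fintype.card_pos.ne'), ← hsum,
      Finset.sum_congr rfl fun j _ => (integral_repr_mul_conj_repr_self_eq hν b i j).symm]
    simp [mul_comm]
  · exact integral_repr_mul_conj_repr_of_ne hν b hij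

theorem integral_sesquilinear_apply_self [IsFiniteMeasure ν] (hν : IsUnitarilyInvariant ν)
    (b : OrthonormalBasis ι ℂ H) {f : H → H → ℂ} (hf : Sesquilinear f) :
    ∫ y, f y y ∂ν = (ν.real Set.univ : ℂ) / Fintype.card ι * ∑ i, f (b i) (b i) := by
  classical
  have hexpand : ∀ y : sphere (0 : H) 1,
      f y y = ∑ i, ∑ j, b.repr y i * conj (b.repr y j) * f (b i) (b j) := fun y => by
    conv_lhs => rw [← b.sum_repr y]
    exact hf.apply_sum_smul_sum_smul _ _ _ _
  simp_rw [hexpand]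
  rw [integral_finsetSum _ fun i _ => integrable_finsetSum _ fun j _ =>
    (integrable_repr_mul_conj_repr b i j).mul_const _]
  simp_rw [integral_finsetSum _ fun j _ => (integrable_repr_mul_conj_repr b _ j).mul_const _,
    integral_mul_const, integral_repr_mul_conj_repr hν b]
  simp [Finset.mul_sum]

end OrthonormalBasis

end UnitarilyInvariant

theorem stmt_2_general (k : ℕ)
    (f : EuclideanSpace ℂ (Fin k) → EuclideanSpace ℂ (Fin k) → ℂ) (hf : Sesquilinear f)
    (E : OrthonormalBasis (Fin k) ℂ (EuclideanSpace ℂ (Fin k))) :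
    ∫ Y : sphere (0 : EuclideanSpace ℂ (Fin k)) 1,
        f (Y : EuclideanSpace ℂ (Fin k)) (Y : EuclideanSpace ℂ (Fin k)) ∂(sphereMeasure k) =
      (((sphereVol k : ℝ) : ℂ) / (k : ℂ)) * ∑ i : Fin k, f (E i) (E i) := by
  have hθ : IsUnitarilyInvariant (sphereMeasure k) := fun u =>
    LinearIsometryEquiv.measurePreserving_sphereHomeomorph (u.restrictScalars ℝ).measurePreserving
  have : IsFiniteMeasure (sphereMeasure k) := by
    unfold sphereMeasure
    infer_instance
  have h := E.integral_sesquilinear_apply_self hθ hf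
  rwa [Fintype.card_fin] at h

/-- for sesquilinear `f` and any orthonormal basis `{E_i}` of `ℂ^k`,
`∫_{S^{2k-1}} f(Y,Y) dθ(Y) = (V(S^{2k-1})/k)·Σ_i f(E_i,E_i)`. -/
theorem stmt_2 (k : ℕ) (hk : 1 ≤ k)
    (f : EuclideanSpace ℂ (Fin k) → EuclideanSpace ℂ (Fin k) → ℂ) (hf : Sesquilinear f)
    (E : OrthonormalBasis (Fin k) ℂ (EuclideanSpace ℂ (Fin k))) :
    ∫ Y : sphere (0 : EuclideanSpace ℂ (Fin k)) 1,
        f (Y : EuclideanSpace ℂ (Fin k)) (Y : EuclideanSpace ℂ (Fin k)) ∂(sphereMeasure k) =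
      (((sphereVol k : ℝ) : ℂ) / (k : ℂ)) * ∑ i : Fin k, f (E i) (E i) :=
  stmt_2_general k f hf E
end

section
/- Let 1 ≤ k ≤ n, let g : (ℂ^n)^4 → ℂ be quadrilinear of curvature type satisfying the Kähler-type symmetries, and let Σ ⊆ ℂ^n be a k-dimensional complex subspace that minimizes (or maximizes) s among all k-dimensional complex subspaces of ℂ^n. Then for every orthonormal basis {E_1,…,E_k} of Σ, every Y ∈ Σ, and every Z ∈ Σ^⊥ (the orthogonal complement of Σ), one has Σ_{i=1}^k g(E_i,E_i,Y,Z) = 0 and Σ_{i=1}^k g(E_i,E_i,Z,Y) = 0. -/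
/-- `g` is quadrilinear of curvature type: linear in the first and third variables,
conjugate-linear in the second and fourth. -/
def CurvatureType {H : Type*} [AddCommGroup H] [Module ℂ H] (g : H → H → H → H → ℂ) : Prop :=
  (∀ x x' y z w, g (x + x') y z w = g x y z w + g x' y z w) ∧
  (∀ (c : ℂ) (x y z w : H), g (c • x) y z w = c * g x y z w) ∧
  (∀ x y y' z w, g x (y + y') z w = g x y z w + g x y' z w) ∧
  (∀ (c : ℂ) (x y z w : H), g x (c • y) z w = (starRingEnd ℂ) c * g x y z w) ∧
  (∀ x y z z' w, g x y (z + z') w = g x y z w + g x y z' w) ∧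
  (∀ (c : ℂ) (x y z w : H), g x y (c • z) w = c * g x y z w) ∧
  (∀ x y z w w', g x y z (w + w') = g x y z w + g x y z w') ∧
  (∀ (c : ℂ) (x y z w : H), g x y z (c • w) = (starRingEnd ℂ) c * g x y z w)

/-- The Kähler-type symmetries of a curvature-type quadrilinear map. -/
def KahlerSymmetries {H : Type*} [AddCommGroup H] [Module ℂ H] (g : H → H → H → H → ℂ) : Prop :=
  (∀ x y z w, g x y z w = g z y x w) ∧
  (∀ x y z w, g x y z w = (starRingEnd ℂ) (g y x w z))

/-! Rotating one vector `e i₀` of an orthonormal frame of `Σ` towards a unit vector `y ⊥ Σ`,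
`e i₀ ↦ cos t • e i₀ + sin t • y`, keeps the frame orthonormal, so `t ↦ Re s` is extremal at
`t = 0` and its derivative vanishes there. By the Kähler-type symmetries this derivative is
`4 Re ∑ i, g (e i) (e i) (e i₀) y`; rotating towards `I • y` instead gives the imaginary part.
Linearity in the third slot extends the vanishing from the frame to all of `Σ`, and conjugate
symmetry gives the second identity. -/

open Function Finset
open scoped ComplexInnerProductSpace

section Algebraic

variable {H : Type*} [AddCommGroup H] [Module ℂ H] {g : H → H → H → H → ℂ}

/-- The paper's `s(Σ)`, computed from a frame `e` of `Σ`. -/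
def scalarCurvature (g : H → H → H → H → ℂ) {ι : Type*} [Fintype ι] (e : ι → H) : ℂ :=
  ∑ i, ∑ j, g (e i) (e i) (e j) (e j)

noncomputable def rotCurve (x y : H) (t : ℝ) : H := (Real.cos t : ℂ) • x + (Real.sin t : ℂ) • y

@[simp]
lemma rotCurve_zero (x y : H) : rotCurve x y 0 = x := by simp [rotCurve]

namespace CurvatureType

lemma apply_rotCurve_left (hg : CurvatureType g) (x y c d : H) (t : ℝ) :
    g (rotCurve x y t) (rotCurve x y t) c d =
      (Real.cos t : ℂ) ^ 2 * g x x c d + Real.cos t * Real.sin t * (g x y c d + g y x c d)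
        + (Real.sin t : ℂ) ^ 2 * g y y c d := by
  obtain ⟨add₁, smul₁, add₂, smul₂, -⟩ := hg
  simp only [rotCurve, add₁, smul₁, add₂, smul₂, Complex.conj_ofReal]
  ring

lemma apply_rotCurve_right (hg : CurvatureType g) (x y a b : H) (t : ℝ) :
    g a b (rotCurve x y t) (rotCurve x y t) =
      (Real.cos t : ℂ) ^ 2 * g a b x x + Real.cos t * Real.sin t * (g a b x y + g a b y x)
        + (Real.sin t : ℂ) ^ 2 * g a b y y := by
  obtain ⟨-, -, -, -, add₃, smul₃, add₄, smul₄⟩ := hg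
  simp only [rotCurve, add₃, smul₃, add₄, smul₄, Complex.conj_ofReal]
  ring

lemma sum_apply_smul_right {ι : Type*} [Fintype ι] (hg : CurvatureType g) (a : ι → H)
    (x w : H) (c : ℂ) :
    ∑ i, g (a i) (a i) x (c • w) = starRingEnd ℂ c * ∑ i, g (a i) (a i) x w := by
  obtain ⟨-, -, -, -, -, -, -, smul₄⟩ := hg
  simp [smul₄, Finset.mul_sum]

lemma sum_apply_eq_zero_of_mem {ι κ : Type*} [Fintype ι] (hg : CurvatureType g)
    {P : Submodule ℂ H} (b : Module.Basis κ ℂ P) {a : ι → H} {w : H}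
    (hb : ∀ m, ∑ i, g (a i) (a i) (b m) w = 0) {y : H} (hy : y ∈ P) :
    ∑ i, g (a i) (a i) y w = 0 := by
  obtain ⟨-, -, -, -, add₃, smul₃, -⟩ := hg
  let L : H →ₗ[ℂ] ℂ :=
    { toFun := fun y => ∑ i, g (a i) (a i) y w
      map_add' := fun y y' => by simp [add₃, Finset.sum_add_distrib]
      map_smul' := fun c y => by simp [smul₃, Finset.mul_sum] }
  exact LinearMap.congr_fun (b.ext (f₁ := L ∘ₗ P.subtype) (f₂ := 0) hb) ⟨y, hy⟩

end CurvatureType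

end Algebraic

lemma hasDerivAt_trig_combination {f₁ f₂ f₃ : ℝ → ℂ} {f₁' f₂' f₃' : ℂ}
    (h₁ : HasDerivAt f₁ f₁' 0) (h₂ : HasDerivAt f₂ f₂' 0) (h₃ : HasDerivAt f₃ f₃' 0) :
    HasDerivAt (fun t => (Real.cos t : ℂ) ^ 2 * f₁ t + Real.cos t * Real.sin t * f₂ t
      + (Real.sin t : ℂ) ^ 2 * f₃ t) (f₁' + f₂ 0) 0 := by
  have hcos := (Real.hasDerivAt_cos 0).ofReal_comp
  have hsin := (Real.hasDerivAt_sin 0).ofReal_comp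
  refine ((((hcos.fun_pow 2).fun_mul h₁).fun_add ((hcos.fun_mul hsin).fun_mul h₂)).fun_add
    ((hsin.fun_pow 2).fun_mul h₃)).congr_deriv ?_
  simp

namespace CurvatureType

variable {H : Type*} [AddCommGroup H] [Module ℂ H] {g : H → H → H → H → ℂ}

lemma hasDerivAt_apply_rotCurve_right (hg : CurvatureType g) (x y a b : H) :
    HasDerivAt (fun t => g a b (rotCurve x y t) (rotCurve x y t)) (g a b x y + g a b y x) 0 := by
  simp only [hg.apply_rotCurve_right]
  simpa using hasDerivAt_trig_combination (hasDerivAt_const 0 (g a b x x))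
    (hasDerivAt_const 0 (g a b x y + g a b y x)) (hasDerivAt_const 0 (g a b y y))

lemma hasDerivAt_apply_rotCurve_left (hg : CurvatureType g) (x y : H) {c d : ℝ → H}
    {D : H → H → ℂ} (hD : ∀ a b, HasDerivAt (fun t => g a b (c t) (d t)) (D a b) 0) :
    HasDerivAt (fun t => g (rotCurve x y t) (rotCurve x y t) (c t) (d t))
      (D x x + g x y (c 0) (d 0) + g y x (c 0) (d 0)) 0 := by
  simp only [hg.apply_rotCurve_left]
  simpa [add_assoc] using hasDerivAt_trig_combination (hD x x) ((hD x y).add (hD y x)) (hD y y)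

variable {ι : Type*} [DecidableEq ι] (e : ι → H) (i₀ : ι) (y : H)

lemma hasDerivAt_apply_update_rotCurve_right (hg : CurvatureType g) (a b : H) (j : ι) :
    HasDerivAt (fun t => g a b (update e i₀ (rotCurve (e i₀) y t) j)
        (update e i₀ (rotCurve (e i₀) y t) j))
      (if j = i₀ then g a b (e i₀) y + g a b y (e i₀) else 0) 0 := by
  by_cases hj : j = i₀
  · subst hj
    simpa using hg.hasDerivAt_apply_rotCurve_right (e j) y a b
  · simpa [hj] using hasDerivAt_const (0 : ℝ) (g a b (e j) (e j))

lemma hasDerivAt_apply_update_rotCurve (hg : CurvatureType g) (i j : ι) :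
    HasDerivAt (fun t => g (update e i₀ (rotCurve (e i₀) y t) i)
        (update e i₀ (rotCurve (e i₀) y t) i) (update e i₀ (rotCurve (e i₀) y t) j)
        (update e i₀ (rotCurve (e i₀) y t) j))
      ((if i = i₀ then g (e i₀) y (e j) (e j) + g y (e i₀) (e j) (e j) else 0)
        + if j = i₀ then g (e i) (e i) (e i₀) y + g (e i) (e i) y (e i₀) else 0) 0 := by
  by_cases hi : i = i₀
  · subst hi
    simpa [add_comm, add_assoc] using hg.hasDerivAt_apply_rotCurve_left (e i) y
      (hg.hasDerivAt_apply_update_rotCurve_right e i y · · j)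
  · simpa [hi] using hg.hasDerivAt_apply_update_rotCurve_right e i₀ y (e i) (e i) j

lemma hasDerivAt_scalarCurvature_update_rotCurve [Fintype ι] (hg : CurvatureType g) :
    HasDerivAt (fun t => scalarCurvature g (update e i₀ (rotCurve (e i₀) y t)))
      (∑ j, (g (e i₀) y (e j) (e j) + g y (e i₀) (e j) (e j))
        + ∑ i, (g (e i) (e i) (e i₀) y + g (e i) (e i) y (e i₀))) 0 := by
  have h := HasDerivAt.fun_sum (u := univ) fun i _ => HasDerivAt.fun_sum (u := univ) fun j _ =>
    hg.hasDerivAt_apply_update_rotCurve e i₀ y i j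
  simpa [scalarCurvature, Finset.sum_add_distrib] using h

end CurvatureType

section InnerProduct

variable {H : Type*} [NormedAddCommGroup H] [InnerProductSpace ℂ H] {ι : Type*}

lemma norm_rotCurve {x y : H} (hx : ‖x‖ = 1) (hy : ‖y‖ = 1) (hxy : ⟪x, y⟫ = 0) (t : ℝ) :
    ‖rotCurve x y t‖ = 1 := by
  have hsq : ‖rotCurve x y t‖ * ‖rotCurve x y t‖ = 1 := by
    rw [rotCurve, @norm_add_sq_eq_norm_sq_add_norm_sq_of_inner_eq_zero ℂ _ _ _ _ _ _
      (by rw [inner_smul_left, inner_smul_right, hxy, mul_zero, mul_zero]),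
      norm_smul, norm_smul, hx, hy, Complex.norm_real, Complex.norm_real]
    simp [← sq]
  rwa [← sq, pow_eq_one_iff_of_nonneg (norm_nonneg _) two_ne_zero] at hsq

lemma inner_rotCurve_right {x y z : H} (hx : ⟪z, x⟫ = 0) (hy : ⟪z, y⟫ = 0) (t : ℝ) :
    ⟪z, rotCurve x y t⟫ = 0 := by
  simp [rotCurve, hx, hy]

lemma Orthonormal.update [DecidableEq ι] {e : ι → H} (he : Orthonormal ℂ e) {i₀ : ι} {v : H}
    (hv : ‖v‖ = 1) (hev : ∀ j ≠ i₀, ⟪e j, v⟫ = 0) : Orthonormal ℂ (update e i₀ v) := by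
  refine ⟨fun i => ?_, fun i j hij => ?_⟩
  · by_cases hi : i = i₀
    · simp [hi, hv]
    · simp [hi, he.1 i]
  · dsimp only
    by_cases hi : i = i₀
    · subst hi
      have hj : j ≠ i := Ne.symm hij
      rw [update_self, update_of_ne hj, ← inner_conj_symm, hev j hj, map_zero]
    · by_cases hj : j = i₀
      · subst hj
        rw [update_self, update_of_ne hi, hev i hi]
      · rw [update_of_ne hi, update_of_ne hj, he.2 hij]

lemma KahlerSymmetries.swap_pairs_of_diag {g : H → H → H → H → ℂ} (hsym : KahlerSymmetries g)
    (a b c : H) : g a b c c = g c c a b := by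
  obtain ⟨swap₁₃, conj_swap⟩ := hsym
  rw [swap₁₃, conj_swap, swap₁₃, conj_swap, Complex.conj_conj]

theorem re_sum_apply_eq_zero_of_isExtrOn [Fintype ι] [DecidableEq ι] {g : H → H → H → H → ℂ}
    (hg : CurvatureType g) (hsym : KahlerSymmetries g) {e : ι → H} (he : Orthonormal ℂ e)
    (hext : IsExtrOn (fun F => (scalarCurvature g F).re) {F | Orthonormal ℂ F} e)
    {y : H} (hy : ‖y‖ = 1) (hey : ∀ j, ⟪e j, y⟫ = 0) (i₀ : ι) :
    (∑ i, g (e i) (e i) (e i₀) y).re = 0 := by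
  have hframe : Set.MapsTo (fun t => update e i₀ (rotCurve (e i₀) y t)) Set.univ
      {F | Orthonormal ℂ F} := fun t _ => he.update (norm_rotCurve (he.1 i₀) hy (hey i₀) t)
      fun j hj => inner_rotCurve_right (he.2 hj) (hey j) t
  have hlocal :
      IsLocalExtr (fun t => (scalarCurvature g (update e i₀ (rotCurve (e i₀) y t))).re) 0 :=
    (hext.comp_mapsTo hframe (by simp)).isLocalExtr Filter.univ_mem
  have hderiv := Complex.reCLM.hasFDerivAt.comp_hasDerivAt 0
    (hg.hasDerivAt_scalarCurvature_update_rotCurve e i₀ y)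
  have hzero := hlocal.hasDerivAt_eq_zero hderiv
  -- the Kähler-type symmetries turn the derivative into `2 (T + conj T)`, `T` the sum in the goal
  simp only [hsym.swap_pairs_of_diag (e i₀) y, hsym.swap_pairs_of_diag y (e i₀),
    fun i => hsym.2 (e i) (e i) y (e i₀), Complex.reCLM_apply, Complex.add_re, Complex.re_sum,
    Complex.conj_re, Finset.sum_add_distrib] at hzero
  rw [Complex.re_sum]
  linarith

theorem sum_apply_eq_zero_of_isExtrOn [Fintype ι] [DecidableEq ι] {g : H → H → H → H → ℂ}
    (hg : CurvatureType g) (hsym : KahlerSymmetries g) {e : ι → H} (he : Orthonormal ℂ e)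
    (hext : IsExtrOn (fun F => (scalarCurvature g F).re) {F | Orthonormal ℂ F} e)
    {y : H} (hey : ∀ j, ⟪e j, y⟫ = 0) (i₀ : ι) :
    ∑ i, g (e i) (e i) (e i₀) y = 0 := by
  have hunit : ∀ u : H, ‖u‖ = 1 → (∀ j, ⟪e j, u⟫ = 0) → ∑ i, g (e i) (e i) (e i₀) u = 0 := by
    intro u hu heu
    -- rotating towards `I • u` instead of `u` gives the imaginary part
    have hIu := re_sum_apply_eq_zero_of_isExtrOn hg hsym he hext (y := Complex.I • u)
      (by rw [norm_smul, Complex.norm_I, one_mul, hu]) (by simp [heu]) i₀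
    rw [hg.sum_apply_smul_right] at hIu
    refine Complex.ext (re_sum_apply_eq_zero_of_isExtrOn hg hsym he hext hu heu i₀) ?_
    simpa using hIu
  by_cases hy : y = 0
  · simpa [hy] using hg.sum_apply_smul_right e (e i₀) 0 0
  · have hy' : (‖y‖ : ℂ) ≠ 0 := by simpa using hy
    have hyu : y = (‖y‖ : ℂ) • ((‖y‖ : ℂ)⁻¹ • y) := by rw [smul_smul, mul_inv_cancel₀ hy', one_smul]
    rw [hyu, hg.sum_apply_smul_right, hunit _ (by simp [norm_smul, hy]) (by simp [hey]), mul_zero]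

lemma Orthonormal.exists_orthonormalBasis_span [Fintype ι] {F : ι → H} (hF : Orthonormal ℂ F) :
    ∃ E : OrthonormalBasis ι ℂ (Submodule.span ℂ (Set.range F)), ∀ i, (E i : H) = F i := by
  set b := Module.Basis.span hF.linearIndependent
  have hb : ⇑b = fun i => ⟨F i, Submodule.subset_span (Set.mem_range_self i)⟩ :=
    funext (Module.Basis.span_apply _)
  exact ⟨b.toOrthonormalBasis (hb ▸ orthonormal_span hF), fun i => by simp [hb]⟩

end InnerProduct

theorem stmt_11_general (n k : ℕ)
    (g : EuclideanSpace ℂ (Fin n) → EuclideanSpace ℂ (Fin n) → EuclideanSpace ℂ (Fin n) →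
      EuclideanSpace ℂ (Fin n) → ℂ)
    (hg : CurvatureType g) (hsym : KahlerSymmetries g)
    (P : Submodule ℂ (EuclideanSpace ℂ (Fin n)))
    (hext :
      (∀ (E : OrthonormalBasis (Fin k) ℂ P) (Q : Submodule ℂ (EuclideanSpace ℂ (Fin n))),
          Module.finrank ℂ Q = k → ∀ E' : OrthonormalBasis (Fin k) ℂ Q,
          (∑ i : Fin k, ∑ j : Fin k, g (E i) (E i) (E j) (E j)).re ≤
            (∑ i : Fin k, ∑ j : Fin k, g (E' i) (E' i) (E' j) (E' j)).re) ∨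
      (∀ (E : OrthonormalBasis (Fin k) ℂ P) (Q : Submodule ℂ (EuclideanSpace ℂ (Fin n))),
          Module.finrank ℂ Q = k → ∀ E' : OrthonormalBasis (Fin k) ℂ Q,
          (∑ i : Fin k, ∑ j : Fin k, g (E' i) (E' i) (E' j) (E' j)).re ≤
            (∑ i : Fin k, ∑ j : Fin k, g (E i) (E i) (E j) (E j)).re))
    (E : OrthonormalBasis (Fin k) ℂ P)
    (Y : EuclideanSpace ℂ (Fin n)) (hY : Y ∈ P)
    (Z : EuclideanSpace ℂ (Fin n)) (hZ : Z ∈ Pᗮ) :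
    (∑ i : Fin k, g (E i) (E i) Y Z) = 0 ∧ (∑ i : Fin k, g (E i) (E i) Z Y) = 0 := by
  set e : Fin k → EuclideanSpace ℂ (Fin n) := fun i => E i
  have he : Orthonormal ℂ e := E.orthonormal.comp_linearIsometry P.subtypeₗᵢ
  have hextr : IsExtrOn (fun F => (scalarCurvature g F).re) {F | Orthonormal ℂ F} e := by
    refine hext.imp (fun h F hF => ?_) (fun h F hF => ?_) <;>
    · obtain ⟨E', hE'⟩ := hF.exists_orthonormalBasis_span
      have hQ : Module.finrank ℂ (Submodule.span ℂ (Set.range F)) = k := by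
        rw [finrank_span_eq_card hF.linearIndependent, Fintype.card_fin]
      simpa [scalarCurvature, e, hE'] using h E _ hQ E'
  have hYZ : ∑ i, g (e i) (e i) Y Z = 0 := hg.sum_apply_eq_zero_of_mem E.toBasis
    (fun m => sum_apply_eq_zero_of_isExtrOn hg hsym he hextr
      (fun j => Submodule.inner_right_of_mem_orthogonal (E j).2 hZ) m) hY
  refine ⟨hYZ, ?_⟩
  rw [← (starRingEnd ℂ).map_zero, ← hYZ, map_sum]
  exact Finset.sum_congr rfl fun i _ => hsym.2 _ _ _ _

/-- first part of the Ni–Zheng estimate. If the `k`-dimensional subspace `P`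
minimizes (or maximizes) `s(Σ) = Σ_{i,j} g(E_i,E_i,E_j,E_j)` among all `k`-dimensional
subspaces, then for every orthonormal basis `{E_i}` of `P`, every `Y ∈ P` and every `Z ∈ P^⊥`,
`Σ_i g(E_i,E_i,Y,Z) = 0` and `Σ_i g(E_i,E_i,Z,Y) = 0`. -/
theorem stmt_11 (n k : ℕ) (hk : 1 ≤ k) (hkn : k ≤ n)
    (g : EuclideanSpace ℂ (Fin n) → EuclideanSpace ℂ (Fin n) → EuclideanSpace ℂ (Fin n) →
      EuclideanSpace ℂ (Fin n) → ℂ)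
    (hg : CurvatureType g) (hsym : KahlerSymmetries g)
    (P : Submodule ℂ (EuclideanSpace ℂ (Fin n))) (hP : Module.finrank ℂ P = k)
    (hext :
      (∀ (E : OrthonormalBasis (Fin k) ℂ P) (Q : Submodule ℂ (EuclideanSpace ℂ (Fin n))),
          Module.finrank ℂ Q = k → ∀ E' : OrthonormalBasis (Fin k) ℂ Q,
          (∑ i : Fin k, ∑ j : Fin k, g (E i) (E i) (E j) (E j)).re ≤
            (∑ i : Fin k, ∑ j : Fin k, g (E' i) (E' i) (E' j) (E' j)).re) ∨
      (∀ (E : OrthonormalBasis (Fin k) ℂ P) (Q : Submodule ℂ (EuclideanSpace ℂ (Fin n))),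
          Module.finrank ℂ Q = k → ∀ E' : OrthonormalBasis (Fin k) ℂ Q,
          (∑ i : Fin k, ∑ j : Fin k, g (E' i) (E' i) (E' j) (E' j)).re ≤
            (∑ i : Fin k, ∑ j : Fin k, g (E i) (E i) (E j) (E j)).re))
    (E : OrthonormalBasis (Fin k) ℂ P)
    (Y : EuclideanSpace ℂ (Fin n)) (hY : Y ∈ P)
    (Z : EuclideanSpace ℂ (Fin n)) (hZ : Z ∈ Pᗮ) :
    (∑ i : Fin k, g (E i) (E i) Y Z) = 0 ∧ (∑ i : Fin k, g (E i) (E i) Z Y) = 0 :=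
  stmt_11_general n k g hg hsym P hext E Y hY Z hZ
end

section
/- Let 1 ≤ k ≤ n, let g : (ℂ^n)^4 → ℂ be quadrilinear of curvature type satisfying the Kähler-type symmetries, and let Σ ⊆ ℂ^n be a k-dimensional complex subspace that maximizes s among all k-dimensional complex subspaces of ℂ^n. Then for every orthonormal basis {E_1,…,E_k} of Σ and every Z ∈ Σ^⊥, the (real) number Σ_{i=1}^k g(E_i,E_i,Z,Z) satisfies Σ_{i=1}^k g(E_i,E_i,Z,Z) ≤ (s(Σ)/(k+1)) · ‖Z‖². -/
open Finset Complex ComplexConjugate Filter Topology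
open scoped ComplexInnerProductSpace

theorem nonpos_of_forall_mul_add_sq_mul_nonpos {L M : ℝ}
    (h : ∀ t ∈ Set.Ioo (0 : ℝ) 1, t * L + t ^ 2 * M ≤ 0) : L ≤ 0 := by
  have hlim : Tendsto (fun t : ℝ => L + t * M) (𝓝[>] 0) (𝓝 L) := by
    have hcont : Continuous fun t : ℝ => L + t * M := by fun_prop
    simpa using (hcont.tendsto 0).mono_left nhdsWithin_le_nhds
  refine le_of_tendsto hlim ?_
  filter_upwards [Ioo_mem_nhdsGT (zero_lt_one' ℝ)] with t ht
  nlinarith [h t ht, ht.1]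

theorem sum_sum_update_eq {ι α β : Type*} [Fintype ι] [DecidableEq ι] [AddCommMonoid β]
    (φ : α → α → β) (f : ι → α) (i₀ : ι) (v : α) :
    ∑ i, ∑ j, φ (Function.update f i₀ v i) (Function.update f i₀ v j) =
      ∑ i ∈ univ.erase i₀, ∑ j ∈ univ.erase i₀, φ (f i) (f j) +
        ∑ j ∈ univ.erase i₀, (φ v (f j) + φ (f j) v) + φ v v := by
  have hf : ∀ i ∈ univ.erase i₀, Function.update f i₀ v i = f i := fun i hi =>
    Function.update_of_ne (ne_of_mem_erase hi) v f
  have hsum : ∀ ψ : α → β,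
      ∑ i ∈ univ.erase i₀, ψ (Function.update f i₀ v i) = ∑ i ∈ univ.erase i₀, ψ (f i) :=
    fun ψ => sum_congr rfl fun i hi => by rw [hf i hi]
  simp only [← sum_erase_add univ _ (mem_univ i₀), Function.update_self, sum_add_distrib,
    hsum (fun x => φ x v), hsum (φ v)]
  rw [sum_congr rfl fun i hi => by rw [hf i hi, hsum (φ (f i))]]
  abel

section Orthonormal

variable {H ι : Type*} [NormedAddCommGroup H] [InnerProductSpace ℂ H]

theorem exists_orthonormalBasis_coe_eq {k : ℕ} {F : Fin k → H} (hF : Orthonormal ℂ F) :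
    ∃ (Q : Submodule ℂ H) (B : OrthonormalBasis (Fin k) ℂ Q),
      Module.finrank ℂ Q = k ∧ ∀ i, (B i : H) = F i := by
  classical
  refine ⟨Submodule.span ℂ (↑(univ.image F) : Set H),
    (OrthonormalBasis.span hF univ).reindex (Equiv.subtypeUnivEquiv mem_univ), ?_, fun i => ?_⟩
  · rw [coe_image, coe_univ, Set.image_univ, finrank_span_eq_card hF.linearIndependent,
      Fintype.card_fin]
  · simp [OrthonormalBasis.reindex_apply, OrthonormalBasis.span_apply]

theorem Orthonormal.update_smul_add_smul [DecidableEq ι] {e : ι → H} (he : Orthonormal ℂ e)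
    {u : H} (hu : ‖u‖ = 1) (heu : ∀ i, ⟪e i, u⟫ = 0) (i₀ : ι) {c σ : ℂ}
    (hcσ : ‖c‖ ^ 2 + ‖σ‖ ^ 2 = 1) :
    Orthonormal ℂ (Function.update e i₀ (c • e i₀ + σ • u)) := by
  have hue : ∀ i, ⟪u, e i⟫ = 0 := fun i => inner_eq_zero_symm.mp (heu i)
  rw [orthonormal_iff_ite] at he ⊢
  have hv : ⟪c • e i₀ + σ • u, c • e i₀ + σ • u⟫ = 1 := by
    simp only [inner_add_left, inner_add_right, inner_smul_left, inner_smul_right, he, if_pos,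
      heu, hue, inner_self_eq_one_of_norm_eq_one hu]
    have h : c * conj c + σ * conj σ = 1 := by rw [mul_conj', mul_conj']; exact_mod_cast hcσ
    linear_combination h
  have hve : ∀ j ≠ i₀, ⟪c • e i₀ + σ • u, e j⟫ = 0 := fun j hj => by
    simp only [inner_add_left, inner_smul_left, he, hue, if_neg hj.symm, mul_zero, add_zero]
  intro i j
  rcases eq_or_ne i i₀ with rfl | hi <;> rcases eq_or_ne j i with rfl | hj
  · rw [Function.update_self, if_pos rfl, hv]
  · simp [Function.update_of_ne hj, hve j hj, hj.symm]
  · rw [Function.update_of_ne hi, he, if_pos rfl]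
  · rcases eq_or_ne j i₀ with rfl | hj₀
    · rw [Function.update_self, Function.update_of_ne hi, if_neg hj.symm, inner_eq_zero_symm]
      exact hve i hi
    · simp [Function.update_of_ne hi, Function.update_of_ne hj₀, he, hj.symm]

end Orthonormal

section Expansion

variable {H ι : Type*} [AddCommGroup H] [Module ℂ H] {g : H → H → H → H → ℂ}

theorem CurvatureType.apply_smul_add_smul_left (hg : CurvatureType g) (c σ : ℂ) (a u x y : H) :
    g (c • a + σ • u) (c • a + σ • u) x y =
      c * conj c * g a a x y + c * conj σ * g a u x y + σ * conj c * g u a x y +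
        σ * conj σ * g u u x y := by
  obtain ⟨h₁, h₂, h₃, h₄, -⟩ := hg
  simp only [h₁, h₂, h₃, h₄]
  ring

theorem CurvatureType.apply_smul_add_smul_right (hg : CurvatureType g) (c σ : ℂ) (a u x y : H) :
    g x y (c • a + σ • u) (c • a + σ • u) =
      c * conj c * g x y a a + c * conj σ * g x y a u + σ * conj c * g x y u a +
        σ * conj σ * g x y u u := by
  obtain ⟨-, -, -, -, h₅, h₆, h₇, h₈⟩ := hg
  simp only [h₅, h₆, h₇, h₈]
  ring

theorem CurvatureType.apply_ofReal_smul_right (hg : CurvatureType g) (c : ℝ) (x y z : H) :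
    g x y ((c : ℂ) • z) ((c : ℂ) • z) = ((c ^ 2 : ℝ) : ℂ) * g x y z z := by
  obtain ⟨-, -, -, -, -, h₆, -, h₈⟩ := hg
  rw [h₆, h₈, conj_ofReal]
  push_cast
  ring

/-- `I ^ m` for `m < 4` runs through the fourth roots of unity `ζ` of the averaging argument. -/
def tilt (r s : ℝ) (a u : H) (m : ℕ) : H := (r : ℂ) • a + ((s : ℂ) * I ^ m) • u

theorem CurvatureType.sum_tilt_right (hg : CurvatureType g) (r s : ℝ) (a u x y : H) :
    ∑ m ∈ range 4, g x y (tilt r s a u m) (tilt r s a u m) =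
      4 * ((r : ℂ) ^ 2 * g x y a a + (s : ℂ) ^ 2 * g x y u u) := by
  simp only [tilt, hg.apply_smul_add_smul_right, sum_range_succ, sum_range_zero, pow_zero,
    pow_one, I_sq, I_pow_three, map_mul, map_neg, map_one, conj_ofReal, conj_I]
  ring_nf
  simp only [I_sq]
  ring

theorem CurvatureType.sum_tilt_diag (hg : CurvatureType g) (r s : ℝ) (a u : H) :
    ∑ m ∈ range 4, g (tilt r s a u m) (tilt r s a u m) (tilt r s a u m) (tilt r s a u m) =
      4 * ((r : ℂ) ^ 4 * g a a a a +
        (r : ℂ) ^ 2 * (s : ℂ) ^ 2 * (g a a u u + g u u a a + g a u u a + g u a a u) +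
        (s : ℂ) ^ 4 * g u u u u) := by
  simp only [tilt, hg.apply_smul_add_smul_left, hg.apply_smul_add_smul_right, sum_range_succ,
    sum_range_zero, pow_zero, pow_one, I_sq, I_pow_three, map_mul, map_neg, map_one, conj_ofReal,
    conj_I]
  ring_nf
  simp only [I_sq, I_pow_four]
  ring

def scalarSum [Fintype ι] (g : H → H → H → H → ℂ) (F : ι → H) : ℂ :=
  ∑ i, ∑ j, g (F i) (F i) (F j) (F j)

theorem KahlerSymmetries.re_apply_swap (hsym : KahlerSymmetries g) (x y : H) :
    (g x x y y).re = (g y y x x).re := by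
  rw [hsym.1 x x y y, hsym.2 y x x y, hsym.1 x y y x, conj_re]

theorem KahlerSymmetries.re_scalarSum_update [Fintype ι] [DecidableEq ι]
    (hsym : KahlerSymmetries g) (e : ι → H) (i₀ : ι) (v : H) :
    (scalarSum g (Function.update e i₀ v)).re =
      (∑ i ∈ univ.erase i₀, ∑ j ∈ univ.erase i₀, g (e i) (e i) (e j) (e j)).re +
        2 * ∑ j ∈ univ.erase i₀, (g (e j) (e j) v v).re + (g v v v v).re := by
  rw [scalarSum, sum_sum_update_eq (fun x y => g x x y y), add_re, add_re, mul_sum]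
  congr 2
  rw [re_sum]
  exact sum_congr rfl fun j _ => by rw [add_re, hsym.re_apply_swap v, two_mul]

theorem sum_re_scalarSum_update_tilt [Fintype ι] [DecidableEq ι] (hg : CurvatureType g)
    (hsym : KahlerSymmetries g) (e : ι → H) (i₀ : ι) (r s : ℝ) (u : H) :
    ∑ m ∈ range 4, (scalarSum g (Function.update e i₀ (tilt r s (e i₀) u m))).re =
      4 * ((∑ i ∈ univ.erase i₀, ∑ j ∈ univ.erase i₀, g (e i) (e i) (e j) (e j)).re +
        2 * ∑ j ∈ univ.erase i₀,
          (r ^ 2 * (g (e j) (e j) (e i₀) (e i₀)).re + s ^ 2 * (g (e j) (e j) u u).re) +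
        ((r ^ 2) ^ 2 * (g (e i₀) (e i₀) (e i₀) (e i₀)).re +
          4 * r ^ 2 * s ^ 2 * (g (e i₀) (e i₀) u u).re + (s ^ 2) ^ 2 * (g u u u u).re)) := by
  set a := e i₀
  have hright : ∀ x, ∑ m ∈ range 4, (g x x (tilt r s a u m) (tilt r s a u m)).re =
      4 * (r ^ 2 * (g x x a a).re + s ^ 2 * (g x x u u).re) := fun x => by
    rw [← re_sum, hg.sum_tilt_right]
    simp only [← ofReal_pow, ← ofReal_ofNat, re_ofReal_mul, add_re]
  have hmid : ∑ m ∈ range 4, ∑ j ∈ univ.erase i₀,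
      (g (e j) (e j) (tilt r s a u m) (tilt r s a u m)).re =
      4 * ∑ j ∈ univ.erase i₀,
        (r ^ 2 * (g (e j) (e j) a a).re + s ^ 2 * (g (e j) (e j) u u).re) := by
    rw [sum_comm, mul_sum]
    exact sum_congr rfl fun j _ => hright (e j)
  have hdiag : ∑ m ∈ range 4,
      (g (tilt r s a u m) (tilt r s a u m) (tilt r s a u m) (tilt r s a u m)).re =
      4 * ((r ^ 2) ^ 2 * (g a a a a).re + 4 * r ^ 2 * s ^ 2 * (g a a u u).re +
        (s ^ 2) ^ 2 * (g u u u u).re) := by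
    rw [← re_sum, hg.sum_tilt_diag, hsym.1 u a a u, hsym.1 a u u a]
    simp only [← ofReal_pow, ← ofReal_mul, ← ofReal_ofNat, re_ofReal_mul, add_re]
    rw [hsym.re_apply_swap u a]
    ring
  simp only [hsym.re_scalarSum_update, sum_add_distrib, sum_const, card_range, ← mul_sum, hmid,
    hdiag, nsmul_eq_mul]
  push_cast
  ring

end Expansion

section Maximal

variable {H ι : Type*} [NormedAddCommGroup H] [InnerProductSpace ℂ H] [Fintype ι]
  {g : H → H → H → H → ℂ}

def IsMaximalFrame (g : H → H → H → H → ℂ) (e : ι → H) : Prop :=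
  ∀ F : ι → H, Orthonormal ℂ F → (scalarSum g F).re ≤ (scalarSum g e).re

theorem IsMaximalFrame.sum_re_add_le [DecidableEq ι] (hg : CurvatureType g)
    (hsym : KahlerSymmetries g) {e : ι → H} (hmax : IsMaximalFrame g e) (he : Orthonormal ℂ e)
    {u : H} (hu : ‖u‖ = 1) (heu : ∀ i, ⟪e i, u⟫ = 0) (i₀ : ι) :
    ∑ j, (g (e j) (e j) u u).re + (g (e i₀) (e i₀) u u).re ≤
      ∑ j, (g (e j) (e j) (e i₀) (e i₀)).re := by
  set a := e i₀
  have hS := hsym.re_scalarSum_update e i₀ a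
  rw [Function.update_eq_self] at hS
  have hvar : ∀ t ∈ Set.Ioo (0 : ℝ) 1,
      t * (2 * ∑ j ∈ univ.erase i₀, ((g (e j) (e j) u u).re - (g (e j) (e j) a a).re) -
          2 * (g a a a a).re + 4 * (g a a u u).re) +
        t ^ 2 * ((g a a a a).re - 4 * (g a a u u).re + (g u u u u).re) ≤ 0 := by
    intro t ht
    have hr : √(1 - t) ^ 2 = 1 - t := Real.sq_sqrt (by linarith [ht.2])
    have hs : √t ^ 2 = t := Real.sq_sqrt ht.1.le
    have hle : ∀ m, (scalarSum g (Function.update e i₀ (tilt √(1 - t) √t a u m))).re ≤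
        (scalarSum g e).re := fun m => hmax _ <| he.update_smul_add_smul hu heu i₀ <| by
      simp [sq_abs, hr, hs]
    have hsum := sum_le_sum fun m (_ : m ∈ range 4) => hle m
    rw [sum_re_scalarSum_update_tilt hg hsym, sum_const, card_range, hS, hr, hs] at hsum
    simp only [mul_sub, sum_sub_distrib, mul_add, sum_add_distrib, ← mul_sum] at hsum ⊢
    linear_combination hsum / 4
  have hL := nonpos_of_forall_mul_add_sq_mul_nonpos hvar
  rw [sum_sub_distrib] at hL
  rw [← sum_erase_add _ _ (mem_univ i₀), ← sum_erase_add _ _ (mem_univ i₀)]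
  linarith

theorem IsMaximalFrame.card_add_one_mul_sum_re_le (hg : CurvatureType g)
    (hsym : KahlerSymmetries g) {e : ι → H} (hmax : IsMaximalFrame g e) (he : Orthonormal ℂ e)
    {u : H} (hu : ‖u‖ = 1) (heu : ∀ i, ⟪e i, u⟫ = 0) :
    (Fintype.card ι + 1) * ∑ i, (g (e i) (e i) u u).re ≤ (scalarSum g e).re := by
  classical
  calc (Fintype.card ι + 1) * ∑ i, (g (e i) (e i) u u).re
      = ∑ i₀, (∑ j, (g (e j) (e j) u u).re + (g (e i₀) (e i₀) u u).re) := by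
        rw [sum_add_distrib, sum_const, card_univ, nsmul_eq_mul]
        ring
    _ ≤ ∑ i₀, ∑ j, (g (e j) (e j) (e i₀) (e i₀)).re :=
        sum_le_sum fun i₀ _ => hmax.sum_re_add_le hg hsym he hu heu i₀
    _ = (scalarSum g e).re := by
        rw [scalarSum, sum_comm, re_sum]
        simp only [re_sum]

theorem IsMaximalFrame.re_sum_apply_le (hg : CurvatureType g) (hsym : KahlerSymmetries g)
    {e : ι → H} (hmax : IsMaximalFrame g e) (he : Orthonormal ℂ e) {z : H}
    (hz : ∀ i, ⟪e i, z⟫ = 0) :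
    (∑ i, g (e i) (e i) z z).re ≤ (scalarSum g e).re / (Fintype.card ι + 1) * ‖z‖ ^ 2 := by
  rcases eq_or_ne z 0 with rfl | hz₀
  · have h0 : ∀ x y : H, g x y 0 0 = 0 := fun x y => by
      simpa using hg.apply_ofReal_smul_right 0 x y 0
    simp [h0]
  set u := (‖z‖ : ℂ)⁻¹ • z
  have hzu : z = (‖z‖ : ℂ) • u :=
    (smul_inv_smul₀ (ofReal_ne_zero.mpr (norm_ne_zero_iff.mpr hz₀)) z).symm
  have hu : ‖u‖ = 1 := norm_smul_inv_norm hz₀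
  have heu : ∀ i, ⟪e i, u⟫ = 0 := fun i => by rw [inner_smul_right, hz i, mul_zero]
  have hbound := hmax.card_add_one_mul_sum_re_le hg hsym he hu heu
  have hscale : (∑ i, g (e i) (e i) z z).re = ‖z‖ ^ 2 * ∑ i, (g (e i) (e i) u u).re := by
    conv_lhs => rw [hzu]
    simp only [hg.apply_ofReal_smul_right, re_sum, re_ofReal_mul, ← mul_sum]
  rw [hscale, mul_comm (_ / _)]
  gcongr
  rw [le_div_iff₀ (by positivity)]
  linarith

end Maximal

theorem stmt_13_general (n k : ℕ)
    (g : EuclideanSpace ℂ (Fin n) → EuclideanSpace ℂ (Fin n) → EuclideanSpace ℂ (Fin n) →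
      EuclideanSpace ℂ (Fin n) → ℂ)
    (hg : CurvatureType g) (hsym : KahlerSymmetries g)
    (P : Submodule ℂ (EuclideanSpace ℂ (Fin n)))
    (hmax :
      ∀ (E : OrthonormalBasis (Fin k) ℂ P) (Q : Submodule ℂ (EuclideanSpace ℂ (Fin n))),
        Module.finrank ℂ Q = k → ∀ E' : OrthonormalBasis (Fin k) ℂ Q,
        (∑ i : Fin k, ∑ j : Fin k, g (E' i) (E' i) (E' j) (E' j)).re ≤
          (∑ i : Fin k, ∑ j : Fin k, g (E i) (E i) (E j) (E j)).re)
    (E : OrthonormalBasis (Fin k) ℂ P)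
    (Z : EuclideanSpace ℂ (Fin n)) (hZ : Z ∈ Pᗮ) :
    (∑ i : Fin k, g (E i) (E i) Z Z).re ≤
      ((∑ i : Fin k, ∑ j : Fin k, g (E i) (E i) (E j) (E j)).re / ((k : ℝ) + 1)) * ‖Z‖ ^ 2 := by
  let e : Fin k → EuclideanSpace ℂ (Fin n) := fun i => E i
  have he : Orthonormal ℂ e := E.orthonormal.comp_linearIsometry P.subtypeₗᵢ
  have hmaxe : IsMaximalFrame g e := fun F hF => by
    obtain ⟨Q, B, hQ, hB⟩ := exists_orthonormalBasis_coe_eq hF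
    simpa only [scalarSum, hB] using hmax E Q hQ B
  have hZe : ∀ i, ⟪e i, Z⟫ = 0 := fun i => (Submodule.mem_orthogonal P Z).mp hZ _ (E i).2
  simpa only [Fintype.card_fin, scalarSum] using hmaxe.re_sum_apply_le hg hsym he hZe

/-- second part of the Ni–Zheng estimate (maximizing case). If the
`k`-dimensional subspace `P` maximizes `s` among all `k`-dimensional subspaces, then for every
orthonormal basis `{E_i}` of `P` and every `Z ∈ P^⊥`,
`Σ_i g(E_i,E_i,Z,Z) ≤ (s(P)/(k+1))·‖Z‖²`. -/
theorem stmt_13 (n k : ℕ) (hk : 1 ≤ k) (hkn : k ≤ n)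
    (g : EuclideanSpace ℂ (Fin n) → EuclideanSpace ℂ (Fin n) → EuclideanSpace ℂ (Fin n) →
      EuclideanSpace ℂ (Fin n) → ℂ)
    (hg : CurvatureType g) (hsym : KahlerSymmetries g)
    (P : Submodule ℂ (EuclideanSpace ℂ (Fin n))) (hP : Module.finrank ℂ P = k)
    (hmax :
      ∀ (E : OrthonormalBasis (Fin k) ℂ P) (Q : Submodule ℂ (EuclideanSpace ℂ (Fin n))),
        Module.finrank ℂ Q = k → ∀ E' : OrthonormalBasis (Fin k) ℂ Q,
        (∑ i : Fin k, ∑ j : Fin k, g (E' i) (E' i) (E' j) (E' j)).re ≤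
          (∑ i : Fin k, ∑ j : Fin k, g (E i) (E i) (E j) (E j)).re)
    (E : OrthonormalBasis (Fin k) ℂ P)
    (Z : EuclideanSpace ℂ (Fin n)) (hZ : Z ∈ Pᗮ) :
    (∑ i : Fin k, g (E i) (E i) Z Z).re ≤
      ((∑ i : Fin k, ∑ j : Fin k, g (E i) (E i) (E j) (E j)).re / ((k : ℝ) + 1)) * ‖Z‖ ^ 2 :=
  stmt_13_general n k g hg hsym P hmax E Z hZ
end
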